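/- Let Σ_x and Σ̃_e be m × m real symmetric positive definite matrices with all diagonal entries equal to 1. Let B = diag(b₁, …, b_m) and L = diag(l₁, …, l_m) be diagonal matrices with entries in [−1, 1] satisfying B² + L² = I. Then J(B, L) = 0 if and only if L Σ̃_e B = B Σ_x L. -/

import Mathlib

/-! Let `U = [[B, L], [-L, B]]`; it is orthogonal because `B` and `L` are commuting symmetric
matrices with `B² + L² = 1`. Conjugating `diag(Σ_x, Σ̃_e)` by `U` gives the positive definite
block matrix `[[M, C], [Cᵀ, N]]` with `M = BΣ_xB + LΣ̃_eL`, `N = LΣ_xL + BΣ̃_eB`,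
`C = LΣ̃_eB - BΣ_xL`, whose determinant is `det Σ_x · det Σ̃_e`. Hence
`J = log (det M · det N) - log det [[M, C], [Cᵀ, N]]`, and `J = 0` is the equality case of
Fischer's inequality. By the Schur complement the block determinant is
`det M · det (N - CᵀM⁻¹C)`, and `det (S + P) > det S` whenever `S` is positive definite and
`P ≠ 0` is positive semidefinite (write `S = BᵀB` and diagonalise `B⁻ᵀPB⁻¹`), so equality
forces `CᵀM⁻¹C = 0`, i.e. `C = 0`. -/

open Matrix

namespace Matrix

variable {m n : Type*} [Fintype m]

theorem PosDef.eq_zero_of_conjTranspose_mul_mul_eq_zero {M : Matrix m m ℝ} {C : Matrix m n ℝ}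
    (hM : M.PosDef) (h : Cᴴ * M * C = 0) : C = 0 := by
  ext i j
  have hcol : star (Cᵀ j) ⬝ᵥ (M *ᵥ Cᵀ j) = (Cᴴ * M * C) j j := by
    rw [Matrix.mul_assoc]
    simp [mul_apply, dotProduct, mulVec]
  have hzero : Cᵀ j = 0 := by
    by_contra hne
    exact (hM.dotProduct_mulVec_pos hne).ne' (hcol.trans (by rw [h]; rfl))
  exact congrFun hzero i

variable [Fintype n] [DecidableEq m] [DecidableEq n]

theorem PosSemidef.eq_zero_of_det_one_add_eq_one {Q : Matrix n n ℝ} (hQ : Q.PosSemidef)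
    (h : (1 + Q).det = 1) : Q = 0 := by
  set ev := hQ.1.eigenvalues
  set U := hQ.1.eigenvectorUnitary
  have hprod : ∏ i, (1 + ev i) = 1 := by
    have hdiag : 1 + Q = Unitary.conjStarAlgAut ℝ _ U (diagonal (1 + ev)) := by
      conv_lhs => rw [hQ.1.spectral_theorem]
      rw [← map_one (Unitary.conjStarAlgAut ℝ _ U), ← map_add, ← diagonal_one, diagonal_add]
      rfl
    calc ∏ i, (1 + ev i) = (diagonal (1 + ev)).det := (det_diagonal).symm
      _ = (1 + Q).det := by
        rw [hdiag, Unitary.conjStarAlgAut_apply, det_mul, det_mul, mul_right_comm, ← det_mul,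
          Unitary.mul_star_self_of_mem U.2, det_one, one_mul]
      _ = 1 := h
  refine hQ.1.eigenvalues_eq_zero_iff.mp (funext fun i => ?_)
  by_contra hi
  have hlt : ∏ _i, (1 : ℝ) < ∏ i, (1 + ev i) :=
    Finset.prod_lt_prod (fun _ _ => one_pos)
      (fun j _ => le_add_of_nonneg_right (hQ.eigenvalues_nonneg j))
      ⟨i, Finset.mem_univ i, by simpa using (hQ.eigenvalues_nonneg i).lt_of_ne' hi⟩
  simp [hprod] at hlt

open scoped MatrixOrder in
theorem PosDef.eq_zero_of_det_add_eq_det {R P : Matrix n n ℝ} (hR : R.PosDef)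
    (hP : P.PosSemidef) (h : (R + P).det = R.det) : P = 0 := by
  obtain ⟨B, rfl⟩ := CStarAlgebra.nonneg_iff_eq_star_mul_self.mp hR.posSemidef.nonneg
  have hB : IsUnit B := isUnit_of_mul_isUnit_right hR.isUnit
  set Q := star B⁻¹ * P * B⁻¹
  have hsum : star B * B + P = star B * (1 + Q) * B := by
    have hBB : B⁻¹ * B = 1 := nonsing_inv_mul B ((isUnit_iff_isUnit_det B).mp hB)
    have hBB' : star B * star B⁻¹ = 1 := by rw [← star_mul, hBB, star_one]
    simp only [Q, Matrix.mul_add, Matrix.add_mul, Matrix.mul_one, ← Matrix.mul_assoc, hBB']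
    rw [Matrix.mul_assoc _ B⁻¹, hBB, Matrix.mul_one, Matrix.one_mul]
  have hQ : (1 + Q).det = 1 := by
    have hdet : (star B * B).det ≠ 0 := hR.det_pos.ne'
    rw [hsum] at h
    simp only [det_mul] at h hdet
    exact mul_left_cancel₀ hdet (by linear_combination h)
  have hQ0 : Q = 0 := (hP.conjTranspose_mul_mul_same B⁻¹).eq_zero_of_det_one_add_eq_one hQ
  simpa [hQ0] using hsum

theorem PosDef.det_fromBlocks_eq_mul_iff {A : Matrix m m ℝ} {B : Matrix m n ℝ}
    {D : Matrix n n ℝ} (h : (fromBlocks A B Bᴴ D).PosDef) :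
    (fromBlocks A B Bᴴ D).det = A.det * D.det ↔ B = 0 := by
  have hA : A.PosDef := h.submatrix Sum.inl_injective
  have := hA.isUnit.invertible
  have hdet : (fromBlocks A B Bᴴ D).det = A.det * (D - Bᴴ * A⁻¹ * B).det := by
    rw [det_fromBlocks₁₁, invOf_eq_nonsing_inv]
  have hS : (D - Bᴴ * A⁻¹ * B).PosDef := by
    refine ((PosDef.fromBlocks₁₁ B D hA).mp h.posSemidef).posDef_iff_det_ne_zero.mpr ?_
    have hpos := h.det_pos
    rw [hdet] at hpos
    exact (pos_of_mul_pos_right hpos hA.det_pos.le).ne'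
  have hP : (Bᴴ * A⁻¹ * B).PosSemidef := hA.inv.posSemidef.conjTranspose_mul_mul_same B
  rw [hdet, mul_right_inj' hA.det_pos.ne']
  constructor
  · intro hSD
    refine hA.inv.eq_zero_of_conjTranspose_mul_mul_eq_zero (hS.eq_zero_of_det_add_eq_det hP ?_)
    rw [sub_add_cancel, hSD]
  · rintro rfl
    simp

theorem PosDef.fromBlocks_zero {A : Matrix m m ℝ} {D : Matrix n n ℝ} (hA : A.PosDef)
    (hD : D.PosDef) : (fromBlocks A 0 0 D).PosDef := by
  have := hA.isUnit.invertible
  have hpsd : (fromBlocks A 0 0ᴴ D).PosSemidef :=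
    (PosDef.fromBlocks₁₁ 0 D hA).mpr (by simpa using hD.posSemidef)
  rw [conjTranspose_zero] at hpsd
  rw [hpsd.posDef_iff_det_ne_zero, det_fromBlocks_zero₂₁]
  exact (mul_pos hA.det_pos hD.det_pos).ne'

def blockRotation (b l : n → ℝ) : Matrix (n ⊕ n) (n ⊕ n) ℝ :=
  fromBlocks (diagonal b) (diagonal l) (-diagonal l) (diagonal b)

theorem blockRotation_mul_conjTranspose {b l : n → ℝ} (hbl : ∀ i, b i ^ 2 + l i ^ 2 = 1) :
    blockRotation b l * (blockRotation b l)ᴴ = 1 := by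
  have hsq : diagonal b * diagonal b + diagonal l * diagonal l = 1 := by
    rw [diagonal_mul_diagonal, diagonal_mul_diagonal, diagonal_add, ← diagonal_one]
    exact congrArg diagonal (funext fun i => by linear_combination hbl i)
  have hcomm : diagonal b * diagonal l = diagonal l * diagonal b := by
    rw [diagonal_mul_diagonal, diagonal_mul_diagonal, funext fun i => mul_comm (b i) (l i)]
  simp only [blockRotation, fromBlocks_conjTranspose, diagonal_conjTranspose, star_trivial,
    conjTranspose_neg, fromBlocks_multiply, ← fromBlocks_one]
  refine fromBlocks_inj.mpr ⟨hsq, ?_, ?_, ?_⟩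
  · rw [Matrix.mul_neg, hcomm, neg_add_cancel]
  · rw [Matrix.neg_mul, hcomm, neg_add_cancel]
  · rw [Matrix.neg_mul, Matrix.mul_neg, neg_neg, add_comm, hsq]

theorem blockRotation_mul_fromBlocks_mul_conjTranspose (b l : n → ℝ) {X Y : Matrix n n ℝ}
    (hX : X.IsHermitian) (hY : Y.IsHermitian) :
    blockRotation b l * fromBlocks X 0 0 Y * (blockRotation b l)ᴴ =
      fromBlocks (diagonal b * X * diagonal b + diagonal l * Y * diagonal l)
        (diagonal l * Y * diagonal b - diagonal b * X * diagonal l)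
        (diagonal l * Y * diagonal b - diagonal b * X * diagonal l)ᴴ
        (diagonal l * X * diagonal l + diagonal b * Y * diagonal b) := by
  simp only [blockRotation, fromBlocks_conjTranspose, diagonal_conjTranspose, star_trivial,
    conjTranspose_neg, fromBlocks_multiply, conjTranspose_sub, conjTranspose_mul, hX.eq, hY.eq,
    Matrix.mul_zero, add_zero, zero_add, Matrix.mul_neg, Matrix.neg_mul, neg_neg, Matrix.mul_assoc]
  congr 1 <;> abel

end Matrix

theorem stmt3_general {m : ℕ} (Sx Se : Matrix (Fin m) (Fin m) ℝ)
    (hx : Sx.PosDef) (he : Se.PosDef)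
    (b l : Fin m → ℝ)
    (hbl : ∀ i, b i ^ 2 + l i ^ 2 = 1) :
    (- Real.log Sx.det - Real.log Se.det
      + Real.log (Matrix.diagonal b * Sx * Matrix.diagonal b
          + Matrix.diagonal l * Se * Matrix.diagonal l).det
      + Real.log (Matrix.diagonal l * Sx * Matrix.diagonal l
          + Matrix.diagonal b * Se * Matrix.diagonal b).det) = 0
    ↔ Matrix.diagonal l * Se * Matrix.diagonal b
        = Matrix.diagonal b * Sx * Matrix.diagonal l := by
  set U := blockRotation b l
  have hU : IsUnit U := IsUnit.of_mul_eq_one _ (blockRotation_mul_conjTranspose hbl)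
  have hconj := blockRotation_mul_fromBlocks_mul_conjTranspose b l hx.1 he.1
  have hPD : (U * fromBlocks Sx 0 0 Se * Uᴴ).PosDef :=
    hU.posDef_star_right_conjugate_iff.mpr (hx.fromBlocks_zero he)
  have hdet : (U * fromBlocks Sx 0 0 Se * Uᴴ).det = Sx.det * Se.det := by
    rw [det_mul, det_mul, det_fromBlocks_zero₂₁, mul_right_comm, ← det_mul,
      blockRotation_mul_conjTranspose hbl, det_one, one_mul]
  rw [hconj] at hPD hdet
  set M := diagonal b * Sx * diagonal b + diagonal l * Se * diagonal l
  set N := diagonal l * Sx * diagonal l + diagonal b * Se * diagonal b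
  have hM : 0 < M.det := (hPD.submatrix Sum.inl_injective).det_pos
  have hN : 0 < N.det := (hPD.submatrix Sum.inr_injective).det_pos
  rw [← sub_eq_zero (b := diagonal b * Sx * diagonal l), ← hPD.det_fromBlocks_eq_mul_iff, hdet,
    ← Real.log_injOn_pos.eq_iff (mul_pos hx.det_pos he.det_pos) (mul_pos hM hN),
    Real.log_mul hx.det_pos.ne' he.det_pos.ne', Real.log_mul hM.ne' hN.ne']
  constructor <;> intro h <;> linarith

theorem stmt3 {m : ℕ} (Sx Se : Matrix (Fin m) (Fin m) ℝ)
    (hx : Sx.PosDef) (he : Se.PosDef)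
    (hxd : ∀ i, Sx i i = 1) (hed : ∀ i, Se i i = 1)
    (b l : Fin m → ℝ)
    (hb : ∀ i, b i ∈ Set.Icc (-1 : ℝ) 1) (hl : ∀ i, l i ∈ Set.Icc (-1 : ℝ) 1)
    (hbl : ∀ i, b i ^ 2 + l i ^ 2 = 1) :
    (- Real.log Sx.det - Real.log Se.det
      + Real.log (Matrix.diagonal b * Sx * Matrix.diagonal b
          + Matrix.diagonal l * Se * Matrix.diagonal l).det
      + Real.log (Matrix.diagonal l * Sx * Matrix.diagonal l
          + Matrix.diagonal b * Se * Matrix.diagonal b).det) = 0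
    ↔ Matrix.diagonal l * Se * Matrix.diagonal b
        = Matrix.diagonal b * Sx * Matrix.diagonal l :=
  stmt3_general Sx Se hx he b l hbl
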